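/- (Boundedness of the WVD-QOLCT, Theorem 3.2) For all f, g ∈ L²(ℝ²,ℍ) and all t = (t₁,t₂), u = (u₁,u₂) ∈ ℝ², the quaternion norm of the WVD-QOLCT satisfies |W^{A₁,A₂}_{f,g}(t,u)| ≤ (2/(π·√(b₁·b₂))) · ‖f‖ · ‖g‖. -/

import Mathlib

open MeasureTheory Real

noncomputable section

/-- The real quaternions. -/
abbrev ℍ := Quaternion ℝ

/-- The imaginary unit `i`. -/
def qi : ℍ := ⟨0, 1, 0, 0⟩

/-- The imaginary unit `j`. -/
def qj : ℍ := ⟨0, 0, 1, 0⟩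

/-- The quaternion exponential. -/
def qexp (q : ℍ) : ℍ := NormedSpace.exp q

/-- A parameter tuple `A = (a, b, c, d, r, s)` for the offset linear canonical transform. -/
structure OLCT where
  a : ℝ
  b : ℝ
  c : ℝ
  d : ℝ
  r : ℝ
  s : ℝ

/-- The QOLCT kernel `K^e_A(t, u)` with imaginary unit `e`:
`(1/√(2π b)) · exp(−e π/4) · exp((e/(2b)) (a t² + 2t(r−u) − 2u(dr − bs) + d u² + d r²))`. -/
def kernelK (P : OLCT) (e : ℍ) (t u : ℝ) : ℍ :=
  ((Real.sqrt (2 * Real.pi * P.b))⁻¹ : ℝ) •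
    (qexp ((-(Real.pi / 4)) • e) *
      qexp (((1 / (2 * P.b)) *
        (P.a * t ^ 2 + 2 * t * (P.r - u) - 2 * u * (P.d * P.r - P.b * P.s)
          + P.d * u ^ 2 + P.d * P.r ^ 2)) • e))

/-- The Wigner–Ville distribution associated with the two-sided QOLCT:
`W^{A₁,A₂}_{f,g}(t,u) = ∫ K^i_{A₁}(n₁,u₁) f(t+n/2) conj(g(t−n/2)) K^j_{A₂}(n₂,u₂) dn`. -/
def WVD (P1 P2 : OLCT) (f g : ℝ × ℝ → ℍ) (t u : ℝ × ℝ) : ℍ :=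
  ∫ n : ℝ × ℝ,
    kernelK P1 qi n.1 u.1 * f (t + n / 2) * star (g (t - n / 2)) * kernelK P2 qj n.2 u.2

/-- The `L²` norm `‖f‖ = (∫ |f(x)|² dx)^{1/2}` of `f : ℝ² → ℍ`. -/
def L2norm (f : ℝ × ℝ → ℍ) : ℝ := Real.sqrt (∫ x : ℝ × ℝ, ‖f x‖ ^ 2)

/-! Exponentials of pure imaginary quaternions are unit quaternions, so the kernels `K^i_{A₁}`,
`K^j_{A₂}` have constant modulus `(2π b)^{-1/2}` and
`|W(t, u)| ≤ (2π √(b₁ b₂))⁻¹ ∫ |f(t + n/2)| |g(t − n/2)| dn`.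
By Cauchy–Schwarz and the substitutions `x = t ± n/2`, each of Jacobian `4` on `ℝ²`, the integral
is at most `4 ‖f‖ ‖g‖`. -/

open scoped ENNReal

namespace MeasureTheory

variable {E F : Type*} [NormedAddCommGroup E] [NormedSpace ℝ E] [MeasurableSpace E] [BorelSpace E]
  [FiniteDimensional ℝ E] {μ : Measure E} [μ.IsAddHaarMeasure] [NormedAddCommGroup F]

theorem MemLp.comp_smul {p : ℝ≥0∞} {f : E → F} (hf : MemLp f p μ) {c : ℝ} (hc : c ≠ 0) :
    MemLp (fun x => f (c • x)) p μ := by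
  have hmap : MemLp f p (Measure.map (c • ·) μ) := by
    rw [Measure.map_addHaar_smul μ hc]
    exact hf.smul_measure ENNReal.ofReal_ne_top
  exact hmap.comp_of_map (measurable_const_smul c).aemeasurable

theorem MemLp.comp_add_smul {p : ℝ≥0∞} {f : E → F} (hf : MemLp f p μ) (t : E) {c : ℝ}
    (hc : c ≠ 0) : MemLp (fun x => f (t + c • x)) p μ :=
  (hf.comp_measurePreserving (measurePreserving_add_left μ t)).comp_smul hc

theorem integral_comp_add_smul [NormedSpace ℝ F] (f : E → F) (t : E) (c : ℝ) :
    ∫ x, f (t + c • x) ∂μ = |(c ^ Module.finrank ℝ E)⁻¹| • ∫ x, f x ∂μ := by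
  rw [Measure.integral_comp_smul μ (fun y => f (t + y)) c, integral_add_left_eq_self]

end MeasureTheory

theorem norm_qexp_smul {e : ℍ} (he : e.re = 0) (x : ℝ) : ‖qexp (x • e)‖ = 1 := by
  simp [qexp, he]

theorem norm_kernelK (P : OLCT) {e : ℍ} (he : e.re = 0) (t u : ℝ) :
    ‖kernelK P e t u‖ = (√(2 * π * P.b))⁻¹ := by
  rw [kernelK, norm_smul, norm_mul, norm_qexp_smul he, norm_qexp_smul he, mul_one, mul_one,
    Real.norm_of_nonneg (by positivity)]

theorem L2norm_comp_add_smul (f : ℝ × ℝ → ℍ) (t : ℝ × ℝ) (c : ℝ) :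
    L2norm (fun x => f (t + c • x)) = |c|⁻¹ * L2norm f := by
  have hrank : Module.finrank ℝ (ℝ × ℝ) = 2 := by simp
  rw [L2norm, integral_comp_add_smul (fun x => ‖f x‖ ^ 2), hrank, smul_eq_mul,
    Real.sqrt_mul (abs_nonneg _), L2norm, ← inv_pow, abs_pow, Real.sqrt_sq (abs_nonneg _),
    abs_inv]

theorem integral_norm_mul_norm_le_L2norm {F G : ℝ × ℝ → ℍ} (hF : MemLp F 2 volume)
    (hG : MemLp G 2 volume) : ∫ x, ‖F x‖ * ‖G x‖ ≤ L2norm F * L2norm G := by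
  have h := integral_mul_norm_le_Lp_mul_Lq Real.HolderConjugate.two_two
    (by simpa using hF) (by simpa using hG)
  simpa [L2norm, Real.sqrt_eq_rpow] using h

theorem integral_norm_mul_norm_shift_le {f g : ℝ × ℝ → ℍ} (hf : MemLp f 2 volume)
    (hg : MemLp g 2 volume) (t : ℝ × ℝ) :
    ∫ n, ‖f (t + n / 2)‖ * ‖g (t - n / 2)‖ ≤ 4 * L2norm f * L2norm g := by
  have hplus : ∀ n : ℝ × ℝ, t + n / 2 = t + (2⁻¹ : ℝ) • n := fun n => by
    ext <;> simp [div_eq_inv_mul]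
  have hminus : ∀ n : ℝ × ℝ, t - n / 2 = t + (-2⁻¹ : ℝ) • n := fun n => by
    ext <;> simp [div_eq_inv_mul, sub_eq_add_neg]
  simp only [hplus, hminus]
  refine (integral_norm_mul_norm_le_L2norm (hf.comp_add_smul t (by norm_num))
    (hg.comp_add_smul t (by norm_num))).trans_eq ?_
  rw [L2norm_comp_add_smul, L2norm_comp_add_smul]
  norm_num
  ring

theorem norm_WVD_le (P1 P2 : OLCT) (f g : ℝ × ℝ → ℍ) (t u : ℝ × ℝ) :
    ‖WVD P1 P2 f g t u‖ ≤ (√(2 * π * P1.b))⁻¹ * (√(2 * π * P2.b))⁻¹ *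
      ∫ n, ‖f (t + n / 2)‖ * ‖g (t - n / 2)‖ := by
  refine (norm_integral_le_integral_norm _).trans_eq ?_
  rw [← integral_const_mul]
  congr 1 with n
  simp only [norm_mul, norm_star, norm_kernelK _ (show qi.re = 0 from rfl),
    norm_kernelK _ (show qj.re = 0 from rfl)]
  ring

theorem inv_sqrt_two_pi_mul_inv_sqrt_two_pi {b₁ : ℝ} (hb₁ : 0 ≤ b₁) (b₂ : ℝ) :
    (√(2 * π * b₁))⁻¹ * (√(2 * π * b₂))⁻¹ = (2 * π * √(b₁ * b₂))⁻¹ := by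
  rw [← mul_inv, ← Real.sqrt_mul (by positivity),
    show 2 * π * b₁ * (2 * π * b₂) = (2 * π) ^ 2 * (b₁ * b₂) by ring,
    Real.sqrt_mul (by positivity), Real.sqrt_sq (by positivity)]

theorem wvd_qolct_bounded_general (P1 P2 : OLCT)
    (hb1 : 0 < P1.b)
    (f g : ℝ × ℝ → ℍ) (hf : MemLp f 2 volume) (hg : MemLp g 2 volume)
    (t u : ℝ × ℝ) :
    ‖WVD P1 P2 f g t u‖ ≤
      2 / (Real.pi * Real.sqrt (P1.b * P2.b)) * L2norm f * L2norm g := by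
  calc ‖WVD P1 P2 f g t u‖
      ≤ (2 * π * √(P1.b * P2.b))⁻¹ * (4 * L2norm f * L2norm g) := by
        rw [← inv_sqrt_two_pi_mul_inv_sqrt_two_pi hb1.le]
        exact (norm_WVD_le P1 P2 f g t u).trans
          (mul_le_mul_of_nonneg_left (integral_norm_mul_norm_shift_le hf hg t) (by positivity))
    _ = 2 / (π * √(P1.b * P2.b)) * L2norm f * L2norm g := by
        field_simp
        ring

/-- **Boundedness of the WVD-QOLCT (Theorem 3.2).** -/
theorem wvd_qolct_bounded (P1 P2 : OLCT)
    (hA1 : P1.a * P1.d - P1.b * P1.c = 1) (hb1 : 0 < P1.b)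
    (hA2 : P2.a * P2.d - P2.b * P2.c = 1) (hb2 : 0 < P2.b)
    (f g : ℝ × ℝ → ℍ) (hf : MemLp f 2 volume) (hg : MemLp g 2 volume)
    (t u : ℝ × ℝ) :
    ‖WVD P1 P2 f g t u‖ ≤
      2 / (Real.pi * Real.sqrt (P1.b * P2.b)) * L2norm f * L2norm g :=
  wvd_qolct_bounded_general P1 P2 hb1 f g hf hg t u
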